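/- Let ρ, σ be d×d density matrices, Λ = sqrt(ρ)σsqrt(ρ), r = min{rank(ρ), rank(σ)}, and let Λ̂ be any Hermitian d×d matrix with rank(Λ̂) ≤ rank(Λ). Setting F̂ = Tr[sqrt(Λ̂₊)] where Λ̂₊ is the positive part of Λ̂, we have |F(ρ,σ) - F̂| = |Tr[sqrt(Λ)] - Tr[sqrt(Λ̂₊)]| ≤ sqrt(2)·r·sqrt(‖Λ - Λ̂‖₁). -/

import Mathlib

open Matrix ComplexOrder

attribute [local instance] Classical.propDecidable

/-- Square root of a positive semidefinite matrix (junk value `0` otherwise). -/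
noncomputable def psqrt {d : ℕ} (X : Matrix (Fin d) (Fin d) ℂ) : Matrix (Fin d) (Fin d) ℂ :=
  if h : X.PosSemidef then
    (h.1.eigenvectorUnitary : Matrix (Fin d) (Fin d) ℂ) *
      diagonal (((↑) : ℝ → ℂ) ∘ (fun x => Real.sqrt x) ∘ h.1.eigenvalues) *
      (star h.1.eigenvectorUnitary : Matrix (Fin d) (Fin d) ℂ) else 0

/-- Schatten 1-norm (trace norm): `‖M‖₁ = Tr √(Mᴴ M)`. -/
noncomputable def traceNorm {d : ℕ} (M : Matrix (Fin d) (Fin d) ℂ) : ℝ :=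
  (psqrt (Mᴴ * M)).trace.re

/-- Fidelity `F(X, σ) = Tr √(√σ X √σ)` of positive semidefinite matrices. -/
noncomputable def fid {d : ℕ} (X σ : Matrix (Fin d) (Fin d) ℂ) : ℝ :=
  (psqrt (psqrt σ * X * psqrt σ)).trace.re

/-!
Write `Λ = √ρ σ √ρ` and `P = Λ̂₊`. With `M = √σ √ρ` one has `√σ ρ √σ = M Mᴴ` and `Λ = Mᴴ M`, which
share their characteristic polynomial, so `F(ρ, σ) = Tr √Λ`.

The trace norm of a Hermitian `X` dominates `Re Tr (G X)` for every `-1 ≤ G ≤ 1`, with equality at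
`G = sign X`. Testing against suitable `G` gives the triangle inequality, `‖Λ̂ - P‖₁ ≤ ‖Λ - Λ̂‖₁`
(take the projection onto the negative eigenspace of `Λ̂` and use `Λ ≥ 0`), hence
`‖Λ - P‖₁ ≤ 2 ‖Λ - Λ̂‖₁`, and the Powers–Størmer inequality `Tr (√X - √Y)² ≤ ‖X - Y‖₁`
(take `G = sign (√X - √Y)`).

Both `Λ` and `P` have rank at most `r`. If `r = 1`, then `Tr √X = √(Tr X)` and
`|√a - √b| ≤ √|a - b|` conclude. Otherwise `C = √Λ - √P` has rank at most `2r`, and Cauchy–Schwarz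
on its eigenvalues with Powers–Størmer gives `|Tr C| ≤ √(2r) · √(2 ‖Λ - Λ̂‖₁)`, which is at most
`√2 · r · √‖Λ - Λ̂‖₁` since `2r ≤ r²` for `r ≠ 1`.
-/

lemma Real.sign_mul_self_eq_abs (x : ℝ) : Real.sign x * x = |x| := by
  rcases lt_trichotomy x 0 with h | rfl | h
  · simp [Real.sign_of_neg h, abs_of_neg h]
  · simp
  · simp [Real.sign_of_pos h, abs_of_pos h]

lemma Real.abs_sign_le_one (x : ℝ) : |Real.sign x| ≤ 1 := by
  rcases Real.sign_apply_eq x with h | h | h <;> simp [h]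

lemma Real.sqrt_add_le_add_sqrt {x y : ℝ} (hx : 0 ≤ x) (hy : 0 ≤ y) :
    √(x + y) ≤ √x + √y := by
  rw [Real.sqrt_le_iff]
  refine ⟨by positivity, ?_⟩
  rw [add_sq, Real.sq_sqrt hx, Real.sq_sqrt hy]
  nlinarith [Real.sqrt_nonneg x, Real.sqrt_nonneg y]

lemma Real.abs_sqrt_sub_sqrt_le {a b : ℝ} (ha : 0 ≤ a) (hb : 0 ≤ b) :
    |√a - √b| ≤ √|a - b| := by
  wlog hba : b ≤ a generalizing a b
  · rw [abs_sub_comm, abs_sub_comm a]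
    exact this hb ha (le_of_not_ge hba)
  rw [abs_of_nonneg (sub_nonneg.mpr (Real.sqrt_le_sqrt hba)), abs_of_nonneg (sub_nonneg.mpr hba),
    sub_le_iff_le_add]
  simpa using Real.sqrt_add_le_add_sqrt (sub_nonneg.mpr hba) hb

lemma Real.sum_sqrt_eq_sqrt_sum {ι : Type*} [Fintype ι] {w : ι → ℝ}
    (hsupp : Subsingleton {i // w i ≠ 0}) : ∑ i, √(w i) = √(∑ i, w i) := by
  by_cases h : ∃ i, w i ≠ 0
  · obtain ⟨i₀, hi₀⟩ := h
    have hzero : ∀ j, j ≠ i₀ → w j = 0 := fun j hj => by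
      by_contra hwj
      exact hj (congrArg Subtype.val
        (Subsingleton.elim (⟨j, hwj⟩ : {i // w i ≠ 0}) ⟨i₀, hi₀⟩))
    rw [Finset.sum_eq_single i₀ (fun j _ hj => by simp [hzero j hj]) (by simp),
      Finset.sum_eq_single i₀ (fun j _ hj => hzero j hj) (by simp)]
  · simp only [not_exists, not_not] at h
    simp [h]

open scoped MatrixOrder

namespace Matrix

variable {d : ℕ} {A B X : Matrix (Fin d) (Fin d) ℂ}

lemma continuousOn_spectrum (f : ℝ → ℝ) : ContinuousOn f (spectrum ℝ A) :=
  A.finite_real_spectrum.continuousOn f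

lemma IsHermitian.trace_cfc (hA : A.IsHermitian) (f : ℝ → ℝ) :
    (cfc f A).trace = ∑ i, (f (hA.eigenvalues i) : ℂ) := by
  rw [hA.cfc_eq, IsHermitian.cfc, Unitary.conjStarAlgAut_apply, trace_mul_cycle,
    Unitary.coe_star_mul_self, one_mul, trace_diagonal]
  rfl

lemma IsHermitian.re_trace_cfc (hA : A.IsHermitian) (f : ℝ → ℝ) :
    (cfc f A).trace.re = ∑ i, f (hA.eigenvalues i) := by
  simp [hA.trace_cfc]

lemma IsHermitian.re_trace_eq (hA : A.IsHermitian) : A.trace.re = ∑ i, hA.eigenvalues i := by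
  simp [hA.trace_eq_sum_eigenvalues]

lemma PosSemidef.psqrt_eq (hA : A.PosSemidef) : psqrt A = cfc Real.sqrt A := by
  rw [hA.1.cfc_eq, psqrt, dif_pos hA]
  rfl

lemma PosSemidef.psqrt_posSemidef (hA : A.PosSemidef) : (psqrt A).PosSemidef := by
  rw [hA.psqrt_eq, ← nonneg_iff_posSemidef]
  exact cfc_nonneg fun x _ => Real.sqrt_nonneg x

lemma PosSemidef.psqrt_mul_self (hA : A.PosSemidef) : psqrt A * psqrt A = A := by
  rw [hA.psqrt_eq, ← cfc_mul ..]
  conv_rhs => rw [← cfc_id' ℝ A]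
  refine cfc_congr fun x hx => Real.mul_self_sqrt ?_
  exact spectrum_nonneg_of_nonneg (nonneg_iff_posSemidef.mpr hA) hx

lemma PosSemidef.re_trace_nonneg (hA : A.PosSemidef) : 0 ≤ A.trace.re :=
  (RCLike.nonneg_iff.mp hA.trace_nonneg).1

lemma PosSemidef.re_trace_mul_nonneg (hA : A.PosSemidef) (hB : B.PosSemidef) :
    0 ≤ (A * B).trace.re := by
  have hconj : (psqrt A * B * psqrt A).PosSemidef := by
    simpa [hA.psqrt_posSemidef.1.eq] using hB.mul_mul_conjTranspose_same (psqrt A)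
  rw [← hA.psqrt_mul_self, Matrix.mul_assoc, trace_mul_comm]
  exact hconj.re_trace_nonneg

lemma rank_cfc_le (hA : A.IsHermitian) {f : ℝ → ℝ} (hf : f 0 = 0) :
    (cfc f A).rank ≤ A.rank := by
  have h : cfc f A = A * cfc (fun x => f x / x) A := by
    conv_rhs => enter [1]; rw [← cfc_id' ℝ A]
    rw [← cfc_mul (fun x => x) _ A (by fun_prop) (continuousOn_spectrum _)]
    refine cfc_congr fun x _ => ?_
    rcases eq_or_ne x 0 with rfl | hx
    · simp [hf]
    · field_simp
  rw [h]
  exact rank_mul_le_left _ _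

lemma rank_sub_le (A B : Matrix (Fin d) (Fin d) ℂ) : (A - B).rank ≤ A.rank + B.rank := by
  have hr : LinearMap.range (A - B).mulVecLin
      ≤ LinearMap.range A.mulVecLin ⊔ LinearMap.range B.mulVecLin := by
    rintro x ⟨v, rfl⟩
    rw [mulVecLin_apply, sub_mulVec, sub_eq_add_neg]
    exact Submodule.add_mem_sup ⟨v, rfl⟩ (Submodule.neg_mem _ ⟨v, rfl⟩)
  exact (Submodule.finrank_mono hr).trans (Submodule.finrank_add_le_finrank_add_finrank _ _)

lemma IsHermitian.traceNorm_cfc (hA : A.IsHermitian) (f : ℝ → ℝ) :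
    traceNorm (cfc f A) = ∑ i, |f (hA.eigenvalues i)| := by
  have hsq : (cfc f A)ᴴ * cfc f A = cfc (fun x => f x ^ 2) A := by
    rw [IsHermitian.eq (cfc_predicate f A), ← cfc_mul f f A (continuousOn_spectrum _)
      (continuousOn_spectrum _)]
    simp only [sq]
  have hpsd : (cfc (fun x => f x ^ 2) A).PosSemidef :=
    nonneg_iff_posSemidef.mp (cfc_nonneg fun x _ => sq_nonneg (f x))
  rw [traceNorm, hsq, hpsd.psqrt_eq,
    ← cfc_comp' Real.sqrt (fun x => f x ^ 2) A (by fun_prop) (continuousOn_spectrum _),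
    hA.re_trace_cfc]
  simp only [Real.sqrt_sq_eq_abs]

lemma IsHermitian.traceNorm_eq (hA : A.IsHermitian) :
    traceNorm A = ∑ i, |hA.eigenvalues i| := by
  simpa [cfc_id' ℝ A] using hA.traceNorm_cfc (fun x => x)

lemma IsHermitian.abs_re_trace_le_traceNorm (hA : A.IsHermitian) :
    |A.trace.re| ≤ traceNorm A := by
  rw [hA.re_trace_eq, hA.traceNorm_eq]
  exact Finset.abs_sum_le_sum_abs _ _

lemma IsHermitian.cfc_sign_mul_self (hA : A.IsHermitian) :
    cfc Real.sign A * A = cfc (fun x : ℝ => |x|) A := by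
  conv_lhs => enter [2]; rw [← cfc_id' ℝ A]
  rw [← cfc_mul _ _ A (continuousOn_spectrum _)]
  exact cfc_congr fun x _ => Real.sign_mul_self_eq_abs x

lemma IsHermitian.traceNorm_eq_re_trace_cfc_sign_mul (hA : A.IsHermitian) :
    traceNorm A = (cfc Real.sign A * A).trace.re := by
  rw [hA.cfc_sign_mul_self, hA.re_trace_cfc, hA.traceNorm_eq]

lemma IsHermitian.neg_one_le_cfc (hA : A.IsHermitian) {g : ℝ → ℝ} (hg : ∀ x, -1 ≤ g x) :
    -1 ≤ cfc g A := by
  simpa using algebraMap_le_cfc g (-1) A (fun x _ => hg x) (continuousOn_spectrum _)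

lemma IsHermitian.cfc_max_zero_sub_cfc_max_neg_zero (hA : A.IsHermitian) :
    cfc (fun x : ℝ => max x 0) A - cfc (fun x : ℝ => max (-x) 0) A = A := by
  rw [← cfc_sub ..]
  conv_rhs => rw [← cfc_id' ℝ A]
  exact cfc_congr fun x _ => max_zero_sub_max_neg_zero_eq_self x

lemma IsHermitian.re_trace_mul_le_traceNorm (hX : X.IsHermitian) {G : Matrix (Fin d) (Fin d) ℂ}
    (hG₁ : -1 ≤ G) (hG₂ : G ≤ 1) : (G * X).trace.re ≤ traceNorm X := by
  set Xp := cfc (fun x : ℝ => max x 0) X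
  set Xn := cfc (fun x : ℝ => max (-x) 0) X
  have hsplit : X = Xp - Xn := hX.cfc_max_zero_sub_cfc_max_neg_zero.symm
  have hnorm : traceNorm X = Xp.trace.re + Xn.trace.re := by
    rw [hX.traceNorm_eq, hX.re_trace_cfc, hX.re_trace_cfc, ← Finset.sum_add_distrib]
    exact Finset.sum_congr rfl fun i _ => (max_zero_add_max_neg_zero_eq_abs_self _).symm
  have hXp : Xp.PosSemidef := nonneg_iff_posSemidef.mp (cfc_nonneg fun x _ => le_max_right _ _)
  have hXn : Xn.PosSemidef := nonneg_iff_posSemidef.mp (cfc_nonneg fun x _ => le_max_right _ _)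
  have hp : 0 ≤ ((1 - G) * Xp).trace.re := (le_iff.mp hG₂).re_trace_mul_nonneg hXp
  have hn : 0 ≤ ((G - -1) * Xn).trace.re := (le_iff.mp hG₁).re_trace_mul_nonneg hXn
  rw [hnorm]
  conv_lhs => rw [hsplit]
  simp only [Matrix.mul_sub, Matrix.sub_mul, sub_neg_eq_add, Matrix.add_mul, Matrix.one_mul,
    trace_sub, trace_add, Complex.sub_re, Complex.add_re] at hp hn ⊢
  linarith

lemma IsHermitian.re_trace_cfc_sign_mul_le_traceNorm (hA : A.IsHermitian) (hX : X.IsHermitian) :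
    (cfc Real.sign A * X).trace.re ≤ traceNorm X :=
  hX.re_trace_mul_le_traceNorm
    (hA.neg_one_le_cfc fun x => (abs_le.mp (Real.abs_sign_le_one x)).1)
    (cfc_le_one _ _ fun x _ => (abs_le.mp (Real.abs_sign_le_one x)).2)

lemma IsHermitian.traceNorm_add_le (hA : A.IsHermitian) (hB : B.IsHermitian) :
    traceNorm (A + B) ≤ traceNorm A + traceNorm B := by
  rw [(hA.add hB).traceNorm_eq_re_trace_cfc_sign_mul, Matrix.mul_add, trace_add, Complex.add_re]
  exact add_le_add ((hA.add hB).re_trace_cfc_sign_mul_le_traceNorm hA)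
    ((hA.add hB).re_trace_cfc_sign_mul_le_traceNorm hB)

lemma PosSemidef.traceNorm_sub_cfc_posPart_le (hB : B.PosSemidef) (hA : A.IsHermitian) :
    traceNorm (A - cfc (fun x : ℝ => max x 0) A) ≤ traceNorm (B - A) := by
  set Q := cfc (fun x : ℝ => if x < 0 then (1 : ℝ) else 0) A
  have hQ₀ : 0 ≤ Q := cfc_nonneg fun x _ => by split_ifs <;> norm_num
  have hnorm : traceNorm (A - cfc (fun x : ℝ => max x 0) A) = -(Q * A).trace.re := by
    conv_lhs => enter [1, 1]; rw [← cfc_id' ℝ A]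
    conv_rhs => enter [1, 1, 1, 2]; rw [← cfc_id' ℝ A]
    rw [← cfc_sub .., hA.traceNorm_cfc, ← cfc_mul _ _ A (continuousOn_spectrum _),
      hA.re_trace_cfc, ← Finset.sum_neg_distrib]
    refine Finset.sum_congr rfl fun i _ => ?_
    rcases lt_or_ge (hA.eigenvalues i) 0 with h | h
    · simp [h, h.le, abs_of_neg h]
    · simp [h, not_lt.mpr h]
  have hQB : 0 ≤ (Q * B).trace.re := (nonneg_iff_posSemidef.mp hQ₀).re_trace_mul_nonneg hB
  have hvar : (Q * (B - A)).trace.re ≤ traceNorm (B - A) :=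
    (hB.1.sub hA).re_trace_mul_le_traceNorm ((neg_nonpos.mpr zero_le_one).trans hQ₀)
      (cfc_le_one _ _ fun x _ => by split_ifs <;> norm_num)
  rw [Matrix.mul_sub, trace_sub, Complex.sub_re] at hvar
  linarith

lemma IsHermitian.trace_cfc_sign_mul_mul_self_sub_mul_self (hAB : (A - B).IsHermitian) :
    (cfc Real.sign (A - B) * (A * A - B * B)).trace
      = (cfc (fun x : ℝ => |x|) (A - B) * (A + B)).trace := by
  set C := A - B with hC
  set S := cfc Real.sign C
  have hSC : S * C = cfc (fun x : ℝ => |x|) C := hAB.cfc_sign_mul_self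
  have hCS : C * S = S * C := by
    simpa [cfc_id' ℝ C] using (cfc_commute_cfc (fun x : ℝ => x) Real.sign C).eq
  have hid : (2 : ℂ) • (A * A - B * B) = C * (A + B) + (A + B) * C := by
    rw [hC, two_smul]
    noncomm_ring
  have hcycle : (S * ((A + B) * C)).trace = (S * C * (A + B)).trace := by
    rw [← Matrix.mul_assoc, trace_mul_cycle, hCS]
  have h2 : (2 : ℂ) * (S * (A * A - B * B)).trace = 2 * (S * C * (A + B)).trace := by
    rw [← smul_eq_mul, ← trace_smul, ← Matrix.mul_smul, hid, Matrix.mul_add, trace_add,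
      hcycle, Matrix.mul_assoc, two_mul]
  rw [mul_left_cancel₀ two_ne_zero h2, hSC]

lemma PosSemidef.re_trace_mul_self_sub_le (hA : A.PosSemidef) (hB : B.PosSemidef) :
    ((A - B) * (A - B)).trace.re ≤ (cfc (fun x : ℝ => |x|) (A - B) * (A + B)).trace.re := by
  have hAB : (A - B).IsHermitian := hA.1.sub hB.1
  set C := A - B with hC
  set Cp := cfc (fun x : ℝ => max x 0) C
  set Cn := cfc (fun x : ℝ => max (-x) 0) C
  have hCp : Cp.PosSemidef := nonneg_iff_posSemidef.mp (cfc_nonneg fun x _ => le_max_right _ _)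
  have hCn : Cn.PosSemidef := nonneg_iff_posSemidef.mp (cfc_nonneg fun x _ => le_max_right _ _)
  have habs : cfc (fun x : ℝ => |x|) C = Cp + Cn := by
    rw [← cfc_add ..]
    exact cfc_congr fun x _ => (max_zero_add_max_neg_zero_eq_abs_self x).symm
  have hsplit : C = Cp - Cn := hAB.cfc_max_zero_sub_cfc_max_neg_zero.symm
  have key : (Cp + Cn) * (A + B) - C * C = (2 : ℝ) • (Cp * B + Cn * A) := by
    conv_lhs => enter [2, 1]; rw [hsplit]
    rw [hC, two_smul]
    noncomm_ring
  have hpos : 0 ≤ ((Cp + Cn) * (A + B) - C * C).trace.re := by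
    have := hCp.re_trace_mul_nonneg hB
    have := hCn.re_trace_mul_nonneg hA
    rw [key, trace_smul, Complex.smul_re, trace_add, Complex.add_re]
    positivity
  rw [trace_sub, Complex.sub_re, sub_nonneg] at hpos
  rwa [habs]

lemma PosSemidef.re_trace_mul_self_sub_le_traceNorm (hA : A.PosSemidef) (hB : B.PosSemidef) :
    ((A - B) * (A - B)).trace.re ≤ traceNorm (A * A - B * B) := by
  have hAB : (A - B).IsHermitian := hA.1.sub hB.1
  calc ((A - B) * (A - B)).trace.re
      ≤ (cfc (fun x : ℝ => |x|) (A - B) * (A + B)).trace.re := hA.re_trace_mul_self_sub_le hB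
    _ = (cfc Real.sign (A - B) * (A * A - B * B)).trace.re := by
      rw [hAB.trace_cfc_sign_mul_mul_self_sub_mul_self]
    _ ≤ traceNorm (A * A - B * B) :=
      hAB.re_trace_cfc_sign_mul_le_traceNorm (by simpa [sq] using (hA.1.pow 2).sub (hB.1.pow 2))

lemma IsHermitian.abs_re_trace_le_sqrt_rank_mul (hA : A.IsHermitian) :
    |A.trace.re| ≤ √A.rank * √((A * A).trace.re) := by
  have hsq : (A * A).trace.re = ∑ i, hA.eigenvalues i ^ 2 := by
    rw [← hA.re_trace_cfc (· ^ 2), cfc_pow_id A 2, sq]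
  set s := Finset.univ.filter fun i => hA.eigenvalues i ≠ 0
  have hrank : (A.rank : ℝ) = s.card := by
    rw [hA.rank_eq_card_non_zero_eigs, Fintype.card_subtype]
  have hsum : ∑ i, hA.eigenvalues i = ∑ i ∈ s, hA.eigenvalues i := by
    rw [Finset.sum_filter_ne_zero]
  have hcs : (∑ i ∈ s, hA.eigenvalues i) ^ 2 ≤ s.card * ∑ i, hA.eigenvalues i ^ 2 :=
    sq_sum_le_card_mul_sum_sq.trans (mul_le_mul_of_nonneg_left
      (Finset.sum_le_sum_of_subset_of_nonneg s.subset_univ fun i _ _ => sq_nonneg _)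
      (Nat.cast_nonneg _))
  rw [hA.re_trace_eq, hsq, hsum, hrank, ← Real.sqrt_mul (Nat.cast_nonneg _),
    ← Real.sqrt_sq_eq_abs]
  exact Real.sqrt_le_sqrt hcs

lemma PosSemidef.re_trace_psqrt_of_rank_le_one (hA : A.PosSemidef) (h : A.rank ≤ 1) :
    (psqrt A).trace.re = √A.trace.re := by
  rw [hA.psqrt_eq, hA.1.re_trace_cfc, hA.1.re_trace_eq]
  refine Real.sum_sqrt_eq_sqrt_sum ?_
  rw [← Fintype.card_le_one_iff_subsingleton, ← hA.1.rank_eq_card_non_zero_eigs]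
  exact h

lemma PosSemidef.rank_psqrt_le (hA : A.PosSemidef) : (psqrt A).rank ≤ A.rank := by
  rw [hA.psqrt_eq]
  exact rank_cfc_le hA.1 Real.sqrt_zero

lemma PosSemidef.traceNorm_sub_cfc_posPart_le_two_mul (hB : B.PosSemidef) (hA : A.IsHermitian) :
    traceNorm (B - cfc (fun x : ℝ => max x 0) A) ≤ 2 * traceNorm (B - A) := by
  have hclosest := hB.traceNorm_sub_cfc_posPart_le hA
  calc traceNorm (B - cfc (fun x : ℝ => max x 0) A)
      = traceNorm ((B - A) + (A - cfc (fun x : ℝ => max x 0) A)) := by rw [sub_add_sub_cancel]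
    _ ≤ traceNorm (B - A) + traceNorm (A - cfc (fun x : ℝ => max x 0) A) :=
      (hB.1.sub hA).traceNorm_add_le (hA.sub (cfc_predicate _ _))
    _ ≤ 2 * traceNorm (B - A) := by linarith

lemma PosSemidef.abs_re_trace_psqrt_sub_le_sqrt_two_mul (hA : A.PosSemidef) (hB : B.PosSemidef)
    {r : ℕ} (hAr : A.rank ≤ r) (hBr : B.rank ≤ r) :
    |(psqrt A).trace.re - (psqrt B).trace.re| ≤ √(2 * r) * √(traceNorm (A - B)) := by
  have hC : (psqrt A - psqrt B).IsHermitian := hA.psqrt_posSemidef.1.sub hB.psqrt_posSemidef.1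
  have hrank : ((psqrt A - psqrt B).rank : ℝ) ≤ 2 * r := by
    have := (rank_sub_le _ _).trans (add_le_add (hA.rank_psqrt_le.trans hAr)
      (hB.rank_psqrt_le.trans hBr))
    exact_mod_cast this.trans_eq (two_mul r).symm
  have hPS : ((psqrt A - psqrt B) * (psqrt A - psqrt B)).trace.re ≤ traceNorm (A - B) := by
    simpa [hA.psqrt_mul_self, hB.psqrt_mul_self] using
      hA.psqrt_posSemidef.re_trace_mul_self_sub_le_traceNorm hB.psqrt_posSemidef
  rw [← Complex.sub_re, ← trace_sub]
  exact hC.abs_re_trace_le_sqrt_rank_mul.trans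
    (mul_le_mul (Real.sqrt_le_sqrt hrank) (Real.sqrt_le_sqrt hPS) (Real.sqrt_nonneg _)
      (Real.sqrt_nonneg _))

lemma PosSemidef.abs_re_trace_psqrt_sub_le_of_rank_le_one (hA : A.PosSemidef)
    (hB : B.PosSemidef) (hA₁ : A.rank ≤ 1) (hB₁ : B.rank ≤ 1) :
    |(psqrt A).trace.re - (psqrt B).trace.re| ≤ √(traceNorm (A - B)) := by
  rw [hA.re_trace_psqrt_of_rank_le_one hA₁, hB.re_trace_psqrt_of_rank_le_one hB₁]
  refine (Real.abs_sqrt_sub_sqrt_le hA.re_trace_nonneg hB.re_trace_nonneg).trans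
    (Real.sqrt_le_sqrt ?_)
  rw [← Complex.sub_re, ← trace_sub]
  exact (hA.1.sub hB.1).abs_re_trace_le_traceNorm

lemma PosSemidef.abs_re_trace_psqrt_sub_le (hA : A.PosSemidef) (hB : B.PosSemidef)
    {r : ℕ} (hAr : A.rank ≤ r) (hBr : B.rank ≤ r) :
    |(psqrt A).trace.re - (psqrt B).trace.re| ≤ r * √(traceNorm (A - B)) := by
  rcases eq_or_ne r 1 with rfl | hr
  · simpa using hA.abs_re_trace_psqrt_sub_le_of_rank_le_one hB hAr hBr
  · refine (hA.abs_re_trace_psqrt_sub_le_sqrt_two_mul hB hAr hBr).trans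
      (mul_le_mul_of_nonneg_right ?_ (Real.sqrt_nonneg _))
    rw [Real.sqrt_le_left (Nat.cast_nonneg r)]
    have : r = 0 ∨ 2 ≤ r := by omega
    rcases this with rfl | h2
    · simp
    · have : (2 : ℝ) ≤ r := by exact_mod_cast h2
      nlinarith

lemma re_trace_psqrt_mul_conjTranspose (M : Matrix (Fin d) (Fin d) ℂ) :
    (psqrt (M * Mᴴ)).trace.re = (psqrt (Mᴴ * M)).trace.re := by
  have h₁ := posSemidef_self_mul_conjTranspose M
  have h₂ := posSemidef_conjTranspose_mul_self M
  have heig : h₁.1.eigenvalues = h₂.1.eigenvalues :=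
    (h₁.1.eigenvalues_eq_eigenvalues_iff h₂.1).mpr (charpoly_mul_comm _ _)
  rw [h₁.psqrt_eq, h₂.psqrt_eq, h₁.1.re_trace_cfc, h₂.1.re_trace_cfc, heig]

lemma fid_eq_re_trace_psqrt {ρ σ : Matrix (Fin d) (Fin d) ℂ} (hρ : ρ.PosSemidef)
    (hσ : σ.PosSemidef) : fid ρ σ = (psqrt (psqrt ρ * σ * psqrt ρ)).trace.re := by
  have hM : (psqrt σ * psqrt ρ)ᴴ = psqrt ρ * psqrt σ := by
    rw [conjTranspose_mul, hρ.psqrt_posSemidef.1.eq, hσ.psqrt_posSemidef.1.eq]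
  have h₁ : psqrt σ * ρ * psqrt σ = (psqrt σ * psqrt ρ) * (psqrt σ * psqrt ρ)ᴴ := by
    conv_lhs => rw [← hρ.psqrt_mul_self]
    rw [hM]
    simp only [Matrix.mul_assoc]
  have h₂ : psqrt ρ * σ * psqrt ρ = (psqrt σ * psqrt ρ)ᴴ * (psqrt σ * psqrt ρ) := by
    conv_lhs => rw [← hσ.psqrt_mul_self]
    rw [hM]
    simp only [Matrix.mul_assoc]
  rw [fid, h₁, h₂, re_trace_psqrt_mul_conjTranspose]

end Matrix

theorem fidelity_continuity_bound_general {d : ℕ} (ρ σ L : Matrix (Fin d) (Fin d) ℂ)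
    (hρ : ρ.PosSemidef) (hσ : σ.PosSemidef)
    (hL : L.IsHermitian)
    (hLrank : L.rank ≤ (psqrt ρ * σ * psqrt ρ).rank) :
    |fid ρ σ - (psqrt (hL.cfc (fun x => max x 0))).trace.re|
        = |(psqrt (psqrt ρ * σ * psqrt ρ)).trace.re
            - (psqrt (hL.cfc (fun x => max x 0))).trace.re| ∧
    |fid ρ σ - (psqrt (hL.cfc (fun x => max x 0))).trace.re|
        ≤ Real.sqrt 2 * (min ρ.rank σ.rank : ℕ)
            * Real.sqrt (traceNorm (psqrt ρ * σ * psqrt ρ - L)) := by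
  rw [fid_eq_re_trace_psqrt hρ hσ, ← hL.cfc_eq]
  refine ⟨rfl, ?_⟩
  set W := psqrt ρ * σ * psqrt ρ
  set P := cfc (fun x : ℝ => max x 0) L
  set r := min ρ.rank σ.rank
  have hW : W.PosSemidef := by
    simpa [hρ.psqrt_posSemidef.1.eq] using hσ.mul_mul_conjTranspose_same (psqrt ρ)
  have hP : P.PosSemidef := nonneg_iff_posSemidef.mp (cfc_nonneg fun x _ => le_max_right x 0)
  have hWr : W.rank ≤ r :=
    le_min ((rank_mul_le_left _ _).trans ((rank_mul_le_left _ _).trans hρ.rank_psqrt_le))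
      ((rank_mul_le_left _ _).trans (rank_mul_le_right _ _))
  have hPr : P.rank ≤ r :=
    (rank_cfc_le hL (f := (max · 0)) (max_self 0)).trans (hLrank.trans hWr)
  calc _ ≤ r * √(traceNorm (W - P)) := hW.abs_re_trace_psqrt_sub_le hP hWr hPr
    _ ≤ r * √(2 * traceNorm (W - L)) := by
      gcongr
      exact hW.traceNorm_sub_cfc_posPart_le_two_mul hL
    _ = √2 * r * √(traceNorm (W - L)) := by
      rw [Real.sqrt_mul zero_le_two]
      ring

theorem fidelity_continuity_bound {d : ℕ} (ρ σ L : Matrix (Fin d) (Fin d) ℂ)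
    (hρ : ρ.PosSemidef) (hσ : σ.PosSemidef)
    (hρ1 : ρ.trace = 1) (hσ1 : σ.trace = 1)
    (hL : L.IsHermitian)
    (hLrank : L.rank ≤ (psqrt ρ * σ * psqrt ρ).rank) :
    |fid ρ σ - (psqrt (hL.cfc (fun x => max x 0))).trace.re|
        = |(psqrt (psqrt ρ * σ * psqrt ρ)).trace.re
            - (psqrt (hL.cfc (fun x => max x 0))).trace.re| ∧
    |fid ρ σ - (psqrt (hL.cfc (fun x => max x 0))).trace.re|
        ≤ Real.sqrt 2 * (min ρ.rank σ.rank : ℕ)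
            * Real.sqrt (traceNorm (psqrt ρ * σ * psqrt ρ - L)) :=
  fidelity_continuity_bound_general ρ σ L hρ hσ hL hLrank
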